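/- Fix D ≥ 1, B ≥ 1, γ ∈ [0,1), and t ∈ ℝ. For z ∈ ℝ^D let z^b denote the coordinatewise b-th power. Let c_1, …, c_B ∈ ℝ^D, c_0 ∈ ℝ^D, and R(z) = Σ_{b=0}^B (1/b!) ⟨c_b, z^b⟩. Let μ₁, μ₂ be probability measures on ℝ^D with all coordinatewise moments up to order B integrable, and set J_i = (1/(1−γ)) ∫ R dμ_i for i = 1,2. Let ψ̃ : ℝ → ℝ be measurable with ∫_0^∞ ∫_ℝ |ψ̃((t−d)/β)| dd dβ ≤ 1, and suppose that for each i ∈ {1,2}, each b ∈ {1,…,B}, and each coordinate q ∈ {1,…,D} there is a bounded measurable function W_i^{(b,q)} : ℝ × (0,∞) → ℝ, with (d,β) ↦ W_i^{(b,q)}(d,β) ψ̃((t−d)/β) integrable, such that the q-th coordinate of the b-th coordinatewise moment satisfies ∫ (z_q)^b dμ_i(z) = ∫_0^∞ ∫_ℝ W_i^{(b,q)}(d,β) ψ̃((t−d)/β) dd dβ. Then |J₁ − J₂| ≤ (√D/(1−γ)) · Σ_{b=1}^B (‖c_b‖₂ / b!) · max_{1≤q≤D} sup_{d∈ℝ,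 β>0} |W₁^{(b,q)}(d,β) − W₂^{(b,q)}(d,β)|. -/

import Mathlib

/-!
Integrating the Taylor expansion of `R` term by term gives
`J₁ - J₂ = (1 - γ)⁻¹ Σ_b (1/b!) ⟪c_b, m₁(b) - m₂(b)⟫`, where `mᵢ(b) = ∫ z^b dμᵢ`; the `b = 0`
terms cancel because both measures have mass one. Every coordinate of `m₁(b) - m₂(b)` is the
inverse wavelet transform of `W₁ - W₂`, hence at most `sup |W₁ - W₂|` times the `L¹` mass of the
reconstruction kernel, which is `≤ 1`. Cauchy–Schwarz and `‖v‖ ≤ √D · max_q |v_q|` conclude.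
-/

open MeasureTheory
open scoped Nat

noncomputable def coordPow {D : ℕ} (z : EuclideanSpace ℝ (Fin D)) (b : ℕ) :
    EuclideanSpace ℝ (Fin D) := WithLp.toLp 2 (fun q => z q ^ b)

lemma le_ciSup₃_of_forall_le {ι α β : Type*} [Finite ι] {f : ι → α → β → ℝ}
    (hf : ∀ i, ∃ C, ∀ a b, f i a b ≤ C) (i : ι) (a : α) (b : β) :
    f i a b ≤ ⨆ (i) (a) (b), f i a b := by
  have : Nonempty β := ⟨b⟩
  obtain ⟨C, hC⟩ := hf i
  calc f i a b ≤ ⨆ b, f i a b := le_ciSup ⟨C, by rintro _ ⟨b, rfl⟩; exact hC a b⟩ b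
    _ ≤ ⨆ (a) (b), f i a b :=
      le_ciSup (f := fun a ↦ ⨆ b, f i a b) ⟨C, by rintro _ ⟨a, rfl⟩; exact ciSup_le (hC a)⟩ a
    _ ≤ ⨆ (i) (a) (b), f i a b :=
      le_ciSup (f := fun i ↦ ⨆ (a) (b), f i a b) (Set.finite_range _).bddAbove i

lemma abs_integral_mul_le_of_ae_abs_le {X : Type*} [MeasurableSpace X] {μ : Measure X}
    {f g : X → ℝ} {S : ℝ} (hg : Integrable (fun x ↦ |g x|) μ) (hf : ∀ᵐ x ∂μ, |f x| ≤ S) :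
    |∫ x, f x * g x ∂μ| ≤ S * ∫ x, |g x| ∂μ := by
  rw [← integral_const_mul, ← Real.norm_eq_abs]
  refine norm_integral_le_of_norm_le (hg.const_mul S) ?_
  filter_upwards [hf] with x hx
  rw [Real.norm_eq_abs, abs_mul]
  exact mul_le_mul_of_nonneg_right hx (abs_nonneg _)

lemma EuclideanSpace.norm_le_sqrt_card_mul {ι : Type*} [Fintype ι] {x : EuclideanSpace ℝ ι}
    {S : ℝ} (hS : 0 ≤ S) (hx : ∀ i, |x i| ≤ S) : ‖x‖ ≤ √(Fintype.card ι) * S := by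
  calc ‖x‖ = √(∑ i, ‖x i‖ ^ 2) := EuclideanSpace.norm_eq x
    _ ≤ √(∑ _ : ι, S ^ 2) := by
      gcongr with i
      exact Real.norm_eq_abs _ ▸ hx i
    _ = √(Fintype.card ι) * S := by
      rw [Finset.sum_const, Finset.card_univ, nsmul_eq_mul, Real.sqrt_mul (Nat.cast_nonneg _),
        Real.sqrt_sq hS]

lemma integral_sum_mul_inner {ι X E : Type*} [MeasurableSpace X] {μ : Measure X}
    [NormedAddCommGroup E] [InnerProductSpace ℝ E] [CompleteSpace E]
    {s : Finset ι} (a : ι → ℝ) (c : ι → E) {f : ι → X → E}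
    (hf : ∀ i ∈ s, Integrable (f i) μ) :
    ∫ x, ∑ i ∈ s, a i * inner ℝ (c i) (f i x) ∂μ =
      ∑ i ∈ s, a i * inner ℝ (c i) (∫ x, f i x ∂μ) := by
  rw [integral_finsetSum _ fun i hi ↦ ((hf i hi).const_inner _).const_mul _]
  refine Finset.sum_congr rfl fun i hi ↦ ?_
  rw [integral_const_mul, integral_inner (hf i hi)]

lemma abs_sub_le_iSup_abs_sub {ι : Type*} [Finite ι] {W₁ W₂ : ι → ℝ → ℝ → ℝ}
    (h₁ : ∀ q, ∃ C, ∀ d β : ℝ, 0 < β → |W₁ q d β| ≤ C)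
    (h₂ : ∀ q, ∃ C, ∀ d β : ℝ, 0 < β → |W₂ q d β| ≤ C) (q : ι) (d : ℝ) {β : ℝ} (hβ : 0 < β) :
    |W₁ q d β - W₂ q d β| ≤ ⨆ (q) (d : ℝ) (β : Set.Ioi (0 : ℝ)), |W₁ q d β - W₂ q d β| := by
  refine le_ciSup₃_of_forall_le (f := fun q d (β : Set.Ioi (0 : ℝ)) ↦ |W₁ q d β - W₂ q d β|)
    (fun q ↦ ?_) q d ⟨β, hβ⟩
  obtain ⟨C₁, hC₁⟩ := h₁ q
  obtain ⟨C₂, hC₂⟩ := h₂ q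
  exact ⟨C₁ + C₂, fun d β ↦ (abs_sub _ _).trans (add_le_add (hC₁ d β β.2) (hC₂ d β β.2))⟩

noncomputable def inverseWaveletTransform (ψ : ℝ → ℝ) (t : ℝ) (W : ℝ → ℝ → ℝ) : ℝ :=
  ∫ p in {p : ℝ × ℝ | 0 < p.2}, W p.1 p.2 * ψ ((t - p.1) / p.2)

lemma abs_inverseWaveletTransform_sub_le {ψ : ℝ → ℝ} {t S : ℝ} {W₁ W₂ : ℝ → ℝ → ℝ}
    (h₁ : Integrable (fun p : ℝ × ℝ ↦ W₁ p.1 p.2 * ψ ((t - p.1) / p.2))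
      (volume.restrict {p : ℝ × ℝ | 0 < p.2}))
    (h₂ : Integrable (fun p : ℝ × ℝ ↦ W₂ p.1 p.2 * ψ ((t - p.1) / p.2))
      (volume.restrict {p : ℝ × ℝ | 0 < p.2}))
    (hψ : Integrable (fun p : ℝ × ℝ ↦ |ψ ((t - p.1) / p.2)|)
      (volume.restrict {p : ℝ × ℝ | 0 < p.2}))
    (hW : ∀ d β, 0 < β → |W₁ d β - W₂ d β| ≤ S) :
    |inverseWaveletTransform ψ t W₁ - inverseWaveletTransform ψ t W₂| ≤
      S * ∫ p in {p : ℝ × ℝ | 0 < p.2}, |ψ ((t - p.1) / p.2)| := by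
  rw [inverseWaveletTransform, inverseWaveletTransform, ← integral_sub h₁ h₂]
  simp_rw [← sub_mul]
  refine abs_integral_mul_le_of_ae_abs_le hψ ?_
  filter_upwards [ae_restrict_mem (measurableSet_lt measurable_const measurable_snd)] with p hp
  exact hW p.1 p.2 hp

section Moments

variable {D b : ℕ} {μ μ₁ μ₂ : Measure (EuclideanSpace ℝ (Fin D))}

lemma integral_coordPow_apply (h : Integrable (fun z ↦ coordPow z b) μ) (q : Fin D) :
    (∫ z, coordPow z b ∂μ) q = ∫ z, z q ^ b ∂μ :=
  ((EuclideanSpace.proj q).integral_comp_comm h).symm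

lemma integral_coordPow_zero [IsProbabilityMeasure μ] :
    ∫ z, coordPow z 0 ∂μ = WithLp.toLp 2 (fun _ ↦ 1) := by
  simp [coordPow]

lemma norm_integral_coordPow_sub_le (h₁ : Integrable (fun z ↦ coordPow z b) μ₁)
    (h₂ : Integrable (fun z ↦ coordPow z b) μ₂) {S : ℝ} (hS : 0 ≤ S)
    (h : ∀ q, |∫ z, z q ^ b ∂μ₁ - ∫ z, z q ^ b ∂μ₂| ≤ S) :
    ‖∫ z, coordPow z b ∂μ₁ - ∫ z, coordPow z b ∂μ₂‖ ≤ √D * S := by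
  calc _ ≤ √(Fintype.card (Fin D)) * S := EuclideanSpace.norm_le_sqrt_card_mul hS fun q ↦ by
        rw [PiLp.sub_apply, integral_coordPow_apply h₁, integral_coordPow_apply h₂]
        exact h q
    _ = √D * S := by rw [Fintype.card_fin]

lemma integral_taylor_sub_integral_taylor {B : ℕ} (c : ℕ → EuclideanSpace ℝ (Fin D))
    [IsProbabilityMeasure μ₁] [IsProbabilityMeasure μ₂]
    (h₁ : ∀ b ≤ B, Integrable (fun z ↦ coordPow z b) μ₁)
    (h₂ : ∀ b ≤ B, Integrable (fun z ↦ coordPow z b) μ₂) :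
    (∫ z, ∑ b ∈ Finset.range (B + 1), 1 / (b ! : ℝ) * inner ℝ (c b) (coordPow z b) ∂μ₁) -
        ∫ z, ∑ b ∈ Finset.range (B + 1), 1 / (b ! : ℝ) * inner ℝ (c b) (coordPow z b) ∂μ₂ =
      ∑ b ∈ Finset.Icc 1 B, 1 / (b ! : ℝ) *
        inner ℝ (c b) (∫ z, coordPow z b ∂μ₁ - ∫ z, coordPow z b ∂μ₂) := by
  have hle : ∀ b ∈ Finset.range (B + 1), b ≤ B :=
    fun b hb ↦ Nat.lt_succ_iff.mp (Finset.mem_range.mp hb)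
  rw [integral_sum_mul_inner _ _ fun b hb ↦ h₁ b (hle b hb),
    integral_sum_mul_inner _ _ fun b hb ↦ h₂ b (hle b hb), ← Finset.sum_sub_distrib,
    Finset.range_eq_Ico, Finset.sum_eq_sum_Ico_succ_bot B.succ_pos, integral_coordPow_zero,
    integral_coordPow_zero, sub_self, zero_add, zero_add, Nat.succ_eq_add_one,
    Finset.Ico_add_one_right_eq_Icc]
  refine Finset.sum_congr rfl fun b _ ↦ ?_
  rw [← mul_sub, ← inner_sub_right]

end Moments

theorem policy_performance_wavelet_bound_general
    {D : ℕ} (B : ℕ)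
    (γ : ℝ) (hγ1 : γ < 1) (t : ℝ)
    (c : ℕ → EuclideanSpace ℝ (Fin D))
    (R : EuclideanSpace ℝ (Fin D) → ℝ)
    (hR : ∀ z, R z = ∑ b ∈ Finset.range (B + 1),
      (1 / (Nat.factorial b : ℝ)) * (inner ℝ (c b) (coordPow z b) : ℝ))
    (μ₁ μ₂ : Measure (EuclideanSpace ℝ (Fin D)))
    [IsProbabilityMeasure μ₁] [IsProbabilityMeasure μ₂]
    (hint₁ : ∀ b ≤ B, Integrable (fun z => coordPow z b) μ₁)
    (hint₂ : ∀ b ≤ B, Integrable (fun z => coordPow z b) μ₂)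
    (J₁ J₂ : ℝ)
    (hJ₁ : J₁ = (1 / (1 - γ)) * ∫ z, R z ∂μ₁)
    (hJ₂ : J₂ = (1 / (1 - γ)) * ∫ z, R z ∂μ₂)
    (ψ : ℝ → ℝ)
    (hψint : Integrable (fun p : ℝ × ℝ => |ψ ((t - p.1) / p.2)|)
      (volume.restrict {p : ℝ × ℝ | 0 < p.2}))
    (hψ1 : (∫ p in {p : ℝ × ℝ | 0 < p.2}, |ψ ((t - p.1) / p.2)|) ≤ 1)
    (W₁ W₂ : ℕ → Fin D → ℝ → ℝ → ℝ)
    (hWb : ∀ b ∈ Finset.Icc 1 B, ∀ q : Fin D,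
      (∃ C, ∀ d β : ℝ, 0 < β → |W₁ b q d β| ≤ C) ∧
      (∃ C, ∀ d β : ℝ, 0 < β → |W₂ b q d β| ≤ C))
    (hWint : ∀ b ∈ Finset.Icc 1 B, ∀ q : Fin D,
      Integrable (fun p : ℝ × ℝ => W₁ b q p.1 p.2 * ψ ((t - p.1) / p.2))
        (volume.restrict {p : ℝ × ℝ | 0 < p.2}) ∧
      Integrable (fun p : ℝ × ℝ => W₂ b q p.1 p.2 * ψ ((t - p.1) / p.2))
        (volume.restrict {p : ℝ × ℝ | 0 < p.2}))
    (hrec₁ : ∀ b ∈ Finset.Icc 1 B, ∀ q : Fin D,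
      (∫ z, (z q) ^ b ∂μ₁) =
        ∫ p in {p : ℝ × ℝ | 0 < p.2}, W₁ b q p.1 p.2 * ψ ((t - p.1) / p.2))
    (hrec₂ : ∀ b ∈ Finset.Icc 1 B, ∀ q : Fin D,
      (∫ z, (z q) ^ b ∂μ₂) =
        ∫ p in {p : ℝ × ℝ | 0 < p.2}, W₂ b q p.1 p.2 * ψ ((t - p.1) / p.2)) :
    |J₁ - J₂| ≤ (Real.sqrt D / (1 - γ)) *
      ∑ b ∈ Finset.Icc 1 B, (‖c b‖ / (Nat.factorial b : ℝ)) *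
        ⨆ (q : Fin D) (d : ℝ) (β : Set.Ioi (0 : ℝ)),
          |W₁ b q d β - W₂ b q d β| := by
  set S : ℕ → ℝ := fun b ↦ ⨆ (q : Fin D) (d : ℝ) (β : Set.Ioi (0 : ℝ)), |W₁ b q d β - W₂ b q d β|
  have hS_nonneg (b : ℕ) : 0 ≤ S b :=
    Real.iSup_nonneg fun _ ↦ Real.iSup_nonneg fun _ ↦ Real.iSup_nonneg fun _ ↦ abs_nonneg _
  have hmoment : ∀ b ∈ Finset.Icc 1 B,
      ‖∫ z, coordPow z b ∂μ₁ - ∫ z, coordPow z b ∂μ₂‖ ≤ √D * S b := by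
    intro b hb
    have hbB := (Finset.mem_Icc.mp hb).2
    refine norm_integral_coordPow_sub_le (hint₁ b hbB) (hint₂ b hbB) (hS_nonneg b) fun q ↦ ?_
    rw [hrec₁ b hb q, hrec₂ b hb q]
    calc _ ≤ S b * ∫ p in {p : ℝ × ℝ | 0 < p.2}, |ψ ((t - p.1) / p.2)| :=
          abs_inverseWaveletTransform_sub_le (hWint b hb q).1 (hWint b hb q).2 hψint
            fun d _ ↦ abs_sub_le_iSup_abs_sub (fun q ↦ (hWb b hb q).1) (fun q ↦ (hWb b hb q).2) q d
      _ ≤ S b := mul_le_of_le_one_right (hS_nonneg b) hψ1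
  have hγ : 0 < 1 - γ := sub_pos.mpr hγ1
  simp_rw [hJ₁, hJ₂, hR]
  rw [← mul_sub, integral_taylor_sub_integral_taylor c hint₁ hint₂, abs_mul,
    abs_of_pos (one_div_pos.mpr hγ)]
  calc 1 / (1 - γ) * |∑ b ∈ Finset.Icc 1 B, 1 / (b ! : ℝ) *
        inner ℝ (c b) (∫ z, coordPow z b ∂μ₁ - ∫ z, coordPow z b ∂μ₂)|
      ≤ 1 / (1 - γ) * ∑ b ∈ Finset.Icc 1 B, 1 / (b ! : ℝ) * (‖c b‖ * (√D * S b)) := by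
        gcongr
        refine (Finset.abs_sum_le_sum_abs _ _).trans (Finset.sum_le_sum fun b hb ↦ ?_)
        rw [abs_mul, abs_of_nonneg (by positivity)]
        gcongr
        exact (abs_real_inner_le_norm _ _).trans (by gcongr; exact hmoment b hb)
    _ = √D / (1 - γ) * ∑ b ∈ Finset.Icc 1 B, ‖c b‖ / (b ! : ℝ) * S b := by
        rw [Finset.mul_sum, Finset.mul_sum]
        refine Finset.sum_congr rfl fun b _ ↦ ?_
        field_simp

/-- Wavelet-domain features indicate policy performance: if
`R(z) = Σ_{b=0}^B ⟨c_b, z^b⟩ / b!`, `J_i = (1/(1−γ)) ∫ R dμ_i` for probability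
measures `μ_i` on `ℝ^D` with integrable moments up to order `B`, and each coordinate
moment `∫ (z_q)^b dμ_i` is reconstructed from a bounded measurable wavelet-domain
function `W_i^{(b,q)}` via the inverse wavelet transform against a dual mother wavelet
`ψ` whose reconstruction kernel has `L¹` mass at most `1`, then
`|J₁ − J₂| ≤ (√D/(1−γ)) Σ_{b=1}^B (‖c_b‖/b!) max_q sup_{d,β>0} |W₁^{(b,q)} − W₂^{(b,q)}|`. -/
theorem policy_performance_wavelet_bound
    {D : ℕ} (hD : 1 ≤ D) (B : ℕ) (hB : 1 ≤ B)
    (γ : ℝ) (hγ0 : 0 ≤ γ) (hγ1 : γ < 1) (t : ℝ)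
    (c : ℕ → EuclideanSpace ℝ (Fin D))
    (R : EuclideanSpace ℝ (Fin D) → ℝ)
    (hR : ∀ z, R z = ∑ b ∈ Finset.range (B + 1),
      (1 / (Nat.factorial b : ℝ)) * (inner ℝ (c b) (coordPow z b) : ℝ))
    (μ₁ μ₂ : Measure (EuclideanSpace ℝ (Fin D)))
    [IsProbabilityMeasure μ₁] [IsProbabilityMeasure μ₂]
    (hint₁ : ∀ b ≤ B, Integrable (fun z => coordPow z b) μ₁)
    (hint₂ : ∀ b ≤ B, Integrable (fun z => coordPow z b) μ₂)
    (J₁ J₂ : ℝ)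
    (hJ₁ : J₁ = (1 / (1 - γ)) * ∫ z, R z ∂μ₁)
    (hJ₂ : J₂ = (1 / (1 - γ)) * ∫ z, R z ∂μ₂)
    (ψ : ℝ → ℝ) (hψm : Measurable ψ)
    (hψint : Integrable (fun p : ℝ × ℝ => |ψ ((t - p.1) / p.2)|)
      (volume.restrict {p : ℝ × ℝ | 0 < p.2}))
    (hψ1 : (∫ p in {p : ℝ × ℝ | 0 < p.2}, |ψ ((t - p.1) / p.2)|) ≤ 1)
    (W₁ W₂ : ℕ → Fin D → ℝ → ℝ → ℝ)
    (hWm : ∀ b ∈ Finset.Icc 1 B, ∀ q : Fin D,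
      Measurable (fun p : ℝ × ℝ => W₁ b q p.1 p.2) ∧
      Measurable (fun p : ℝ × ℝ => W₂ b q p.1 p.2))
    (hWb : ∀ b ∈ Finset.Icc 1 B, ∀ q : Fin D,
      (∃ C, ∀ d β : ℝ, 0 < β → |W₁ b q d β| ≤ C) ∧
      (∃ C, ∀ d β : ℝ, 0 < β → |W₂ b q d β| ≤ C))
    (hWint : ∀ b ∈ Finset.Icc 1 B, ∀ q : Fin D,
      Integrable (fun p : ℝ × ℝ => W₁ b q p.1 p.2 * ψ ((t - p.1) / p.2))
        (volume.restrict {p : ℝ × ℝ | 0 < p.2}) ∧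
      Integrable (fun p : ℝ × ℝ => W₂ b q p.1 p.2 * ψ ((t - p.1) / p.2))
        (volume.restrict {p : ℝ × ℝ | 0 < p.2}))
    (hrec₁ : ∀ b ∈ Finset.Icc 1 B, ∀ q : Fin D,
      (∫ z, (z q) ^ b ∂μ₁) =
        ∫ p in {p : ℝ × ℝ | 0 < p.2}, W₁ b q p.1 p.2 * ψ ((t - p.1) / p.2))
    (hrec₂ : ∀ b ∈ Finset.Icc 1 B, ∀ q : Fin D,
      (∫ z, (z q) ^ b ∂μ₂) =
        ∫ p in {p : ℝ × ℝ | 0 < p.2}, W₂ b q p.1 p.2 * ψ ((t - p.1) / p.2)) :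
    |J₁ - J₂| ≤ (Real.sqrt D / (1 - γ)) *
      ∑ b ∈ Finset.Icc 1 B, (‖c b‖ / (Nat.factorial b : ℝ)) *
        ⨆ (q : Fin D) (d : ℝ) (β : Set.Ioi (0 : ℝ)),
          |W₁ b q d β - W₂ b q d β| :=
  policy_performance_wavelet_bound_general B γ hγ1 t c R hR μ₁ μ₂ hint₁ hint₂ J₁ J₂ hJ₁ hJ₂ ψ hψint
    hψ1 W₁ W₂ hWb hWint hrec₁ hrec₂
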